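/- arXiv:1507.06945 — 4 statements merged into one kernel-verified Lean document; each statement's English description precedes it below -/
import Mathlib

section
/- Let E be a real inner product space, let x_0, …, x_k ∈ E, and let c be a point of the convex hull of {x_0, …, x_k} such that ‖c − x_i‖ = R for every i (for some R ≥ 0). If x ∈ E satisfies ‖x − x_i‖ ≤ r for every i, then ‖x − c‖² ≤ r² − R². (This is the paper's Lemma 8.2: every point of the common intersection of the balls of radius r around the x_i lies within distance √(r² − R²) of the common circumcenter c.) -/
/-!
The difference `‖y - z‖² - ‖c - z‖²` is an affine function of `z`, so its sublevel sets are
half-spaces. At each vertex `xᵢ` it equals `‖y - xᵢ‖² - R² ≤ r² - R²`, hence the same bound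
holds on the convex hull, in particular at `c`, where it equals `‖y - c‖²`.
-/

section

open scoped RealInnerProductSpace

variable {E : Type*} [NormedAddCommGroup E] [InnerProductSpace ℝ E]

theorem norm_sub_sq_sub_norm_sub_sq_real (y c z : E) :
    ‖y - z‖ ^ 2 - ‖c - z‖ ^ 2 = ‖y‖ ^ 2 - ‖c‖ ^ 2 - 2 * ⟪y - c, z⟫ := by
  rw [norm_sub_sq_real, norm_sub_sq_real, inner_sub_left]
  ring

theorem convex_setOf_norm_sub_sq_sub_norm_sub_sq_le (y c : E) (t : ℝ) :
    Convex ℝ {z : E | ‖y - z‖ ^ 2 - ‖c - z‖ ^ 2 ≤ t} := by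
  have half_space : {z : E | ‖y - z‖ ^ 2 - ‖c - z‖ ^ 2 ≤ t} =
      {z | (‖y‖ ^ 2 - ‖c‖ ^ 2 - t) / 2 ≤ innerₛₗ ℝ (y - c) z} := by
    ext z
    simp only [Set.mem_ofPred_eq, innerₛₗ_apply_apply, norm_sub_sq_sub_norm_sub_sq_real]
    constructor <;> intro h <;> linarith
  rw [half_space]
  exact convex_halfSpace_ge (innerₛₗ ℝ (y - c)).isLinear _

end

theorem norm_sub_circumcenter_sq_le_general {E : Type*} [NormedAddCommGroup E]
    [InnerProductSpace ℝ E] {k : ℕ} (x : Fin (k + 1) → E) (c : E) (R r : ℝ)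
    (hc : c ∈ convexHull ℝ (Set.range x))
    (hcR : ∀ i, ‖c - x i‖ = R)
    (y : E) (hy : ∀ i, ‖y - x i‖ ≤ r) :
    ‖y - c‖ ^ 2 ≤ r ^ 2 - R ^ 2 := by
  have vertices_mem : Set.range x ⊆ {z | ‖y - z‖ ^ 2 - ‖c - z‖ ^ 2 ≤ r ^ 2 - R ^ 2} := by
    rintro _ ⟨i, rfl⟩
    simp only [Set.mem_ofPred_eq, hcR, sub_le_sub_iff_right]
    exact pow_le_pow_left₀ (norm_nonneg _) (hy i) 2
  have center_mem := convexHull_min vertices_mem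
    (convex_setOf_norm_sub_sq_sub_norm_sub_sq_le y c _) hc
  simpa using center_mem

/-- **Lemma 8.2.** Let `E` be a real inner product space, `x₀, …, x_k ∈ E`, and let `c`
be a point of the convex hull of `{x₀, …, x_k}` with `‖c - xᵢ‖ = R` for every `i`
(for some `R ≥ 0`). If `x ∈ E` satisfies `‖x - xᵢ‖ ≤ r` for every `i`, then
`‖x - c‖² ≤ r² - R²`. -/
theorem norm_sub_circumcenter_sq_le {E : Type*} [NormedAddCommGroup E]
    [InnerProductSpace ℝ E] {k : ℕ} (x : Fin (k + 1) → E) (c : E) (R r : ℝ)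
    (hR : 0 ≤ R)
    (hc : c ∈ convexHull ℝ (Set.range x))
    (hcR : ∀ i, ‖c - x i‖ = R)
    (y : E) (hy : ∀ i, ‖y - x i‖ ≤ r) :
    ‖y - c‖ ^ 2 ≤ r ^ 2 - R ^ 2 :=
  norm_sub_circumcenter_sq_le_general x c R r hc hcR y hy
end

section
/- Let E be a real inner product space, let x_0, …, x_k ∈ E, and let c be a point of the convex hull of {x_0, …, x_k} such that ‖c − x_i‖ = R for every i (for some 0 ≤ R ≤ r). If p ∈ E satisfies ‖p − c‖ > r + √(r² − R²), then for every x ∈ E with ‖x − x_i‖ ≤ r for all i one has ‖p − x‖ > r. (This is the isolation criterion used in the proof of Lemma 7.2: a ball of radius r centered outside the ball of radius r + √(r² − R²) around c cannot meet the common intersection of the balls of radius r around x_0, …, x_k.) -/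
open RealInnerProductSpace


/-- **Isolation criterion (used in the proof of Lemma 7.2).** Let `E` be a real inner
product space, `x₀, …, x_k ∈ E`, and let `c` be a point of the convex hull of
`{x₀, …, x_k}` with `‖c - xᵢ‖ = R` for every `i` (with `0 ≤ R ≤ r`). If `p ∈ E`
satisfies `‖p - c‖ > r + √(r² - R²)`, then for every `x ∈ E` with `‖x - xᵢ‖ ≤ r` for
all `i` one has `‖p - x‖ > r`: a ball of radius `r` centered outside the ball of radius
`r + √(r² - R²)` around `c` cannot meet the common intersection of the balls of
radius `r` around the `xᵢ`. -/
theorem isolation_of_far_center {E : Type*} [NormedAddCommGroup E]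
    [InnerProductSpace ℝ E] {k : ℕ} (x : Fin (k + 1) → E) (c : E) (R r : ℝ)
    (hR : 0 ≤ R) (hRr : R ≤ r)
    (hc : c ∈ convexHull ℝ (Set.range x))
    (hcR : ∀ i, ‖c - x i‖ = R)
    (p : E) (hp : ‖p - c‖ > r + Real.sqrt (r ^ 2 - R ^ 2)) :
    ∀ y : E, (∀ i, ‖y - x i‖ ≤ r) → ‖p - y‖ > r := by
  intro y hy
  rw [convexHull_range_eq_exists_affineCombination] at hc
  obtain ⟨s, w, hw0, hw1, hwc⟩ := hc
  rw [Finset.affineCombination_eq_linear_combination s x w hw1] at hwc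
  -- key: ‖y - c‖ ≤ √(r² - R²)
  have hne : s.Nonempty := by
    rcases s.eq_empty_or_nonempty with h | h
    · exfalso; rw [h] at hw1; simp at hw1
    · exact h
  have hkey : ‖y - c‖ ^ 2 + R ^ 2 ≤ r ^ 2 := by
    have hsum : ∑ i ∈ s, w i * ⟪y - c, c - x i⟫ = 0 := by
      have h0 : ∑ i ∈ s, w i • (c - x i) = (0 : E) := by
        simp only [smul_sub, Finset.sum_sub_distrib, ← Finset.sum_smul, hw1, hwc, one_smul,
          sub_self]
      calc ∑ i ∈ s, w i * ⟪y - c, c - x i⟫ = ⟪y - c, ∑ i ∈ s, w i • (c - x i)⟫ := by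
            rw [inner_sum]; simp [real_inner_smul_right]
        _ = 0 := by rw [h0, inner_zero_right]
    have hexp : ∀ i, ‖y - x i‖ ^ 2 = ‖y - c‖ ^ 2 + 2 * ⟪y - c, c - x i⟫ + R ^ 2 := by
      intro i
      have : y - x i = (y - c) + (c - x i) := by abel
      rw [this, ← hcR i, ← real_inner_self_eq_norm_sq, ← real_inner_self_eq_norm_sq,
        ← real_inner_self_eq_norm_sq]
      rw [inner_add_add_self, real_inner_comm (c - x i) (y - c)]
      ring
    have hile : ∀ i ∈ s, w i * (‖y - c‖ ^ 2 + 2 * ⟪y - c, c - x i⟫ + R ^ 2) ≤ w i * r ^ 2 := by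
      intro i hi
      apply mul_le_mul_of_nonneg_left _ (hw0 i hi)
      rw [← hexp i]
      have h1 : ‖y - x i‖ ^ 2 ≤ r ^ 2 := by
        apply pow_le_pow_left₀ (norm_nonneg _) (hy i)
      exact h1
    have := Finset.sum_le_sum hile
    simp only [mul_add, Finset.sum_add_distrib, ← Finset.sum_mul, hw1, one_mul] at this
    have h2 : ∑ i ∈ s, w i * (2 * ⟪y - c, c - x i⟫) = 0 := by
      simp_rw [show ∀ a b : ℝ, a * (2 * b) = 2 * (a * b) by intros; ring, ← Finset.mul_sum, hsum,
        mul_zero]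
    linarith [this, h2]
  have hsq : ‖y - c‖ ≤ Real.sqrt (r ^ 2 - R ^ 2) := by
    rw [← Real.sqrt_sq (norm_nonneg (y - c))]
    exact Real.sqrt_le_sqrt (by linarith)
  have htri : ‖p - c‖ ≤ ‖p - y‖ + ‖y - c‖ := by
    have := norm_sub_le_norm_sub_add_norm_sub p y c
    linarith [this]
  linarith
end

section
/- Let d ≥ 1 and for Δ ≥ 0 let V_1(Δ) denote the Lebesgue volume of the intersection of two closed unit balls in ℝ^d whose centers are at distance Δ from each other. Then for every Δ ∈ (0, 2), the function V_1 is differentiable at Δ with derivative V_1′(Δ) = −ω_{d−1} (1 − Δ²/4)^{(d−1)/2}. -/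
open MeasureTheory Metric

/-- `ω k`: the Lebesgue volume of the closed unit ball in `ℝ^k` (with `ω 0 = 1`). -/
noncomputable def unitBallVol (k : ℕ) : ℝ :=
  (volume (closedBall (0 : EuclideanSpace ℝ (Fin k)) 1)).toReal

/-- `V₁ d Δ`: the Lebesgue volume of the intersection of two closed unit balls in
`ℝ^d` (`d ≥ 1`) whose centers are at distance `Δ` from each other (for `Δ ≥ 0`). -/
noncomputable def V₁ (d : ℕ) (hd : 0 < d) (Δ : ℝ) : ℝ :=
  (volume (closedBall (0 : EuclideanSpace ℝ (Fin d)) 1 ∩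
    closedBall (EuclideanSpace.single (⟨0, hd⟩ : Fin d) Δ) 1)).toReal

/-!
Slice the lens perpendicular to the line of centres: at abscissa `t` the slice is a
`(d - 1)`-ball of squared radius `min (1 - t²) (1 - (t - Δ)²)`, so by Fubini
`V₁(Δ) = ω_{d-1} ∫_{Δ-1}^1 min (1 - t²) (1 - (t - Δ)²)^{(d-1)/2} dt`.
The lens is symmetric about the hyperplane `t = Δ / 2`, which turns this into
`2 ω_{d-1} ∫_{Δ/2}^1 (1 - t²)^{(d-1)/2} dt`, and the fundamental theorem of calculus gives the
derivative.
-/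

section Slicing

variable {E : Type*} [NormedAddCommGroup E] [NormedSpace ℝ E] [MeasurableSpace E] [BorelSpace E]
  [FiniteDimensional ℝ E] (μ : Measure E) [μ.IsAddHaarMeasure]

theorem MeasureTheory.Measure.addHaar_setOf_norm_sq_le {c : ℝ} (hc : 0 ≤ c) :
    μ {y | ‖y‖ ^ 2 ≤ c} =
      ENNReal.ofReal (c ^ ((Module.finrank ℝ E : ℝ) / 2)) * μ (closedBall 0 1) := by
  have hball : {y : E | ‖y‖ ^ 2 ≤ c} = closedBall 0 √c := by
    ext y
    rw [Set.mem_ofPred_eq, mem_closedBall_zero_iff, Real.le_sqrt (norm_nonneg y) hc]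
  rw [hball, Measure.addHaar_closedBall' μ 0 (Real.sqrt_nonneg c), Real.sqrt_eq_rpow,
    ← Real.rpow_natCast, ← Real.rpow_mul hc, one_div_mul_eq_div]

theorem MeasureTheory.Measure.prod_addHaar_setOf_norm_sq_le {α : Type*} [MeasurableSpace α]
    (ν : Measure α) {R : α → ℝ} (hR : Measurable R) :
    (ν.prod μ) {p : α × E | ‖p.2‖ ^ 2 ≤ R p.1} =
      (∫⁻ t in {t | 0 ≤ R t}, ENNReal.ofReal (R t ^ ((Module.finrank ℝ E : ℝ) / 2)) ∂ν)
        * μ (closedBall 0 1) := by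
  have hmeas : MeasurableSet {p : α × E | ‖p.2‖ ^ 2 ≤ R p.1} :=
    measurableSet_le (measurable_snd.norm.pow_const 2) (hR.comp measurable_fst)
  have hslice : ∀ t, μ (Prod.mk t ⁻¹' {p : α × E | ‖p.2‖ ^ 2 ≤ R p.1}) =
      {t | 0 ≤ R t}.indicator
        (fun t ↦ ENNReal.ofReal (R t ^ ((Module.finrank ℝ E : ℝ) / 2))) t
        * μ (closedBall 0 1) := by
    intro t
    by_cases ht : t ∈ {t | 0 ≤ R t}
    · rw [Set.indicator_of_mem ht]
      exact Measure.addHaar_setOf_norm_sq_le μ ht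
    · have hempty : Prod.mk t ⁻¹' {p : α × E | ‖p.2‖ ^ 2 ≤ R p.1} = ∅ :=
        Set.eq_empty_of_forall_notMem fun y hy ↦
          ht (show 0 ≤ R t from (sq_nonneg ‖y‖).trans hy)
      rw [hempty, measure_empty, Set.indicator_of_notMem ht, zero_mul]
  have hR' : MeasurableSet {t | 0 ≤ R t} := measurableSet_le measurable_const hR
  rw [Measure.prod_apply hmeas, funext hslice, lintegral_mul_const _
    (((hR.pow_const _).ennreal_ofReal).indicator hR'), lintegral_indicator hR']

end Slicing

theorem measurePreserving_toLp_cons (n : ℕ) :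
    MeasurePreserving
      (fun p : ℝ × EuclideanSpace ℝ (Fin n) ↦
        WithLp.toLp 2 (Fin.cons p.1 p.2.ofLp : Fin (n + 1) → ℝ))
      (volume.prod volume) volume := by
  have h := (PiLp.volume_preserving_toLp (Fin (n + 1))).comp
    (((volume_preserving_piFinSuccAbove (fun _ : Fin (n + 1) ↦ ℝ) 0).symm).comp
      ((MeasurePreserving.id volume).prod (PiLp.volume_preserving_ofLp (Fin n))))
  convert h using 1
  · rfl
  · funext p
    simp only [Function.comp_apply, MeasurableEquiv.piFinSuccAbove_symm_apply,
      Fin.insertNthEquiv_zero]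
    rfl

theorem EuclideanSpace.norm_toLp_cons_sub_single_sq {n : ℕ} (t a : ℝ)
    (y : EuclideanSpace ℝ (Fin n)) :
    ‖WithLp.toLp 2 (Fin.cons t y.ofLp : Fin (n + 1) → ℝ) - EuclideanSpace.single 0 a‖ ^ 2 =
      (t - a) ^ 2 + ‖y‖ ^ 2 := by
  simp [EuclideanSpace.norm_sq_eq, Fin.sum_univ_succ]

theorem preimage_toLp_cons_closedBall_single (n : ℕ) (a : ℝ) {r : ℝ} (hr : 0 ≤ r) :
    (fun p : ℝ × EuclideanSpace ℝ (Fin n) ↦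
        WithLp.toLp 2 (Fin.cons p.1 p.2.ofLp : Fin (n + 1) → ℝ)) ⁻¹'
        closedBall (EuclideanSpace.single 0 a) r =
      {p | ‖p.2‖ ^ 2 ≤ r ^ 2 - (p.1 - a) ^ 2} := by
  ext ⟨t, y⟩
  rw [Set.mem_preimage, mem_closedBall, dist_eq_norm, ← sq_le_sq₀ (norm_nonneg _) hr,
    EuclideanSpace.norm_toLp_cons_sub_single_sq, Set.mem_ofPred_eq, le_sub_iff_add_le']

theorem integral_comp_min_one_sub_sq {F : ℝ → ℝ} (hF : Continuous F) {Δ : ℝ}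
    (hΔ : Δ ∈ Set.Icc 0 2) :
    ∫ t in (Δ - 1)..1, F (min (1 - t ^ 2) (1 - (t - Δ) ^ 2)) =
      2 * ∫ t in (Δ / 2)..1, F (1 - t ^ 2) := by
  obtain ⟨hΔ0, hΔ2⟩ := hΔ
  have hcont : Continuous fun t : ℝ ↦ F (min (1 - t ^ 2) (1 - (t - Δ) ^ 2)) := by fun_prop
  -- on each side of `Δ / 2` the minimum is attained by the ball whose centre is farther away
  have hright : ∫ t in (Δ / 2)..1, F (min (1 - t ^ 2) (1 - (t - Δ) ^ 2)) =
      ∫ t in (Δ / 2)..1, F (1 - t ^ 2) := by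
    refine intervalIntegral.integral_congr fun t ht ↦ ?_
    rw [Set.uIcc_of_le (by linarith)] at ht
    rw [min_eq_left (by nlinarith [ht.1])]
  have hleft : ∫ t in (Δ - 1)..(Δ / 2), F (min (1 - t ^ 2) (1 - (t - Δ) ^ 2)) =
      ∫ t in (Δ / 2)..1, F (1 - t ^ 2) := by
    calc ∫ t in (Δ - 1)..(Δ / 2), F (min (1 - t ^ 2) (1 - (t - Δ) ^ 2))
        = ∫ t in (Δ - 1)..(Δ / 2), F (1 - (Δ - t) ^ 2) := by
          refine intervalIntegral.integral_congr fun t ht ↦ ?_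
          rw [Set.uIcc_of_le (by linarith)] at ht
          rw [min_eq_right (by nlinarith [ht.2]), sub_sq_comm]
      _ = ∫ t in (Δ / 2)..1, F (1 - t ^ 2) := by
          rw [intervalIntegral.integral_comp_sub_left (fun u ↦ F (1 - u ^ 2))]
          congr 1 <;> ring
  rw [← intervalIntegral.integral_add_adjacent_intervals (b := Δ / 2)
    (hcont.intervalIntegrable _ _) (hcont.intervalIntegrable _ _), hleft, hright, two_mul]

theorem V₁_succ_eq_integral (n : ℕ) (hd : 0 < n + 1) {Δ : ℝ} (hΔ : Δ ∈ Set.Icc 0 2) :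
    V₁ (n + 1) hd Δ =
      unitBallVol n *
        ∫ t in (Δ - 1)..1, min (1 - t ^ 2) (1 - (t - Δ) ^ 2) ^ ((n : ℝ) / 2) := by
  obtain ⟨hΔ0, hΔ2⟩ := hΔ
  set R : ℝ → ℝ := fun t ↦ min (1 - t ^ 2) (1 - (t - Δ) ^ 2) with hR
  have hRcont : Continuous R := by fun_prop
  have hpre : (fun p : ℝ × EuclideanSpace ℝ (Fin n) ↦
      WithLp.toLp 2 (Fin.cons p.1 p.2.ofLp : Fin (n + 1) → ℝ)) ⁻¹'
        (closedBall 0 1 ∩ closedBall (EuclideanSpace.single ⟨0, hd⟩ Δ) 1) =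
      {p | ‖p.2‖ ^ 2 ≤ R p.1} := by
    have hcentre : (0 : EuclideanSpace ℝ (Fin (n + 1))) = EuclideanSpace.single 0 0 := by
      ext i; simp
    rw [hcentre, Fin.mk_zero, Set.preimage_inter,
      preimage_toLp_cons_closedBall_single n 0 zero_le_one,
      preimage_toLp_cons_closedBall_single n Δ zero_le_one]
    ext p
    simp [hR]
  have hsupp : {t | 0 ≤ R t} = Set.Icc (Δ - 1) 1 := by
    ext t
    simp only [hR, Set.mem_ofPred_eq, le_min_iff, Set.mem_Icc]
    constructor
    · rintro ⟨h1, h2⟩; constructor <;> nlinarith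
    · rintro ⟨h1, h2⟩; constructor <;> nlinarith
  have hnonneg : ∀ t ∈ Set.Icc (Δ - 1) 1, 0 ≤ R t ^ ((n : ℝ) / 2) := fun t ht ↦
    Real.rpow_nonneg (by rwa [← hsupp] at ht) _
  have hintegrable : IntegrableOn (fun t ↦ R t ^ ((n : ℝ) / 2)) (Set.Icc (Δ - 1) 1) :=
    ((Real.continuous_rpow_const (by positivity)).comp hRcont).integrableOn_Icc
  rw [V₁, ← (measurePreserving_toLp_cons n).measure_preimage
      (measurableSet_closedBall.inter measurableSet_closedBall).nullMeasurableSet, hpre,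
    Measure.prod_addHaar_setOf_norm_sq_le _ _ hRcont.measurable, finrank_euclideanSpace_fin, hsupp,
    ← ofReal_integral_eq_lintegral_ofReal hintegrable
      ((ae_restrict_iff' measurableSet_Icc).2 (.of_forall hnonneg)),
    ENNReal.toReal_mul, ENNReal.toReal_ofReal (setIntegral_nonneg measurableSet_Icc hnonneg),
    integral_Icc_eq_integral_Ioc, ← intervalIntegral.integral_of_le (by linarith), mul_comm]
  rfl

theorem V₁_eq_integral_one_sub_sq {d : ℕ} (hd : 0 < d) {Δ : ℝ} (hΔ : Δ ∈ Set.Icc 0 2) :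
    V₁ d hd Δ =
      2 * unitBallVol (d - 1) * ∫ t in (Δ / 2)..1, (1 - t ^ 2) ^ (((d : ℝ) - 1) / 2) := by
  obtain ⟨n, rfl⟩ := Nat.exists_eq_add_one_of_ne_zero hd.ne'
  rw [V₁_succ_eq_integral n hd hΔ, integral_comp_min_one_sub_sq
    (Real.continuous_rpow_const (by positivity)) hΔ]
  push_cast
  simp only [add_sub_cancel_right]
  ring

/-- For every `Δ ∈ (0, 2)` the function `V₁` is differentiable at `Δ` with derivative
`V₁'(Δ) = -ω_{d-1} (1 - Δ²/4)^{(d-1)/2}`. -/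
theorem hasDerivAt_vol_inter_unit_balls {d : ℕ} (hd : 0 < d) (Δ : ℝ)
    (hΔ : Δ ∈ Set.Ioo (0:ℝ) 2) :
    HasDerivAt (V₁ d hd)
      (-(unitBallVol (d - 1)) * (1 - Δ ^ 2 / 4) ^ (((d : ℝ) - 1) / 2)) Δ := by
  set f : ℝ → ℝ := fun t ↦ (1 - t ^ 2) ^ (((d : ℝ) - 1) / 2)
  have hf : Continuous f :=
    (Real.continuous_rpow_const (div_nonneg (sub_nonneg.2 (Nat.one_le_cast.2 hd)) zero_le_two)).comp
      (by fun_prop)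
  have hV : V₁ d hd =ᶠ[nhds Δ] fun x ↦ 2 * unitBallVol (d - 1) * ∫ t in (x / 2)..1, f t :=
    Filter.eventuallyEq_of_mem (Ioo_mem_nhds hΔ.1 hΔ.2) fun x hx ↦
      V₁_eq_integral_one_sub_sq hd (Set.Ioo_subset_Icc_self hx)
  have hFTC : HasDerivAt (fun x ↦ ∫ t in x..1, f t) (-f (Δ / 2)) (Δ / 2) :=
    intervalIntegral.integral_hasDerivAt_left (hf.intervalIntegrable _ _)
      (hf.stronglyMeasurableAtFilter _ _) hf.continuousAt
  have hvalue : -unitBallVol (d - 1) * (1 - Δ ^ 2 / 4) ^ (((d : ℝ) - 1) / 2) =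
      2 * unitBallVol (d - 1) * (-f (Δ / 2) * (1 / 2)) := by
    simp only [f, div_pow]
    ring_nf
  rw [hvalue]
  exact ((hFTC.comp Δ ((hasDerivAt_id Δ).div_const 2)).const_mul
    (2 * unitBallVol (d - 1))).congr_of_eventuallyEq hV
end

section
/- Let d ≥ 1 and for Δ ≥ 0 let V_1(Δ) denote the Lebesgue volume of the intersection of two closed unit balls in ℝ^d whose centers are at distance Δ from each other. Then V_1(Δ) = ω_d − ω_{d−1} Δ + o(Δ) as Δ → 0⁺; equivalently, lim_{Δ→0⁺} (ω_d − V_1(Δ))/Δ = ω_{d−1}. -/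
open MeasureTheory Metric Filter

/-!
Translating the second ball back by its center `v` shows that the ball minus the lens,
`B(0, 1) \ B(v, 1)`, has the same volume as the slab `{x ∈ B(0, 1) | -‖v‖²/2 < ⟪x, v⟫ ≤ ‖v‖²/2}`.
For `v = Δ e₀` the slab has width `Δ` and lies between the cylinders
`[-Δ/2, Δ/2] × B(0, √(1 - Δ²/4))` and `[-Δ/2, Δ/2] × B(0, 1)` over the unit ball of `ℝ^(d-1)`,
so `(ω_d - V₁(Δ)) / Δ` is squeezed between `(1 - Δ²/4)^((d-1)/2) ω_(d-1)` and `ω_(d-1)`.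
-/

open Set
open scoped RealInnerProductSpace ENNReal

section Lens

variable {E : Type*} [NormedAddCommGroup E] [InnerProductSpace ℝ E]

theorem norm_le_norm_sub_iff (x v : E) : ‖x‖ ≤ ‖x - v‖ ↔ ⟪x, v⟫ ≤ ‖v‖ ^ 2 / 2 := by
  rw [← pow_le_pow_iff_left₀ (norm_nonneg x) (norm_nonneg (x - v)) two_ne_zero, norm_sub_sq_real]
  constructor <;> intro h <;> linarith

variable [FiniteDimensional ℝ E] [MeasurableSpace E] [BorelSpace E]
  (μ : Measure E) [μ.IsAddHaarMeasure]

/-- Below the bisecting hyperplane `⟪x, v⟫ = ‖v‖² / 2` the ball `B(v, r)` lies inside `B(0, r)`,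
above it `B(0, r)` lies inside `B(v, r)`, and translation by `v` carries the part of `B(0, r)`
below `⟪x, v⟫ = -‖v‖² / 2` onto the part of `B(v, r)` below the bisector. -/
theorem measure_closedBall_diff_closedBall (v : E) (r : ℝ) :
    μ (closedBall 0 r \ closedBall v r) =
      μ (closedBall 0 r ∩ {x | ⟪x, v⟫ ∈ Ioc (-(‖v‖ ^ 2 / 2)) (‖v‖ ^ 2 / 2)}) := by
  set H := {x : E | ⟪x, v⟫ ≤ ‖v‖ ^ 2 / 2}
  set H' := {x : E | ⟪x, v⟫ ≤ -(‖v‖ ^ 2 / 2)}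
  have hH : MeasurableSet H := measurableSet_le (by fun_prop) measurable_const
  have hH' : MeasurableSet H' := measurableSet_le (by fun_prop) measurable_const
  have hdiff : closedBall 0 r \ closedBall v r = (closedBall 0 r ∩ H) \ (closedBall v r ∩ H) := by
    ext x
    simp only [Set.mem_sdiff, mem_inter_iff, mem_closedBall_iff_norm, sub_zero, H,
      mem_ofPred_eq]
    constructor
    · rintro ⟨hx, hxv⟩
      have hxH : ⟪x, v⟫ ≤ ‖v‖ ^ 2 / 2 := by
        by_contra h
        exact hxv ((not_le.1 (mt (norm_le_norm_sub_iff x v).1 h)).le.trans hx)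
      exact ⟨⟨hx, hxH⟩, fun h => hxv h.1⟩
    · rintro ⟨⟨hx, hxH⟩, h⟩
      exact ⟨hx, fun hxv => h ⟨hxv, hxH⟩⟩
  have hsub : closedBall v r ∩ H ⊆ closedBall 0 r ∩ H := fun x ⟨hx, hxH⟩ =>
    ⟨mem_closedBall_zero_iff.2 (((norm_le_norm_sub_iff x v).2 hxH).trans
      (mem_closedBall_iff_norm.1 hx)), hxH⟩
  have htranslate : (· + v) ⁻¹' (closedBall v r ∩ H) = closedBall 0 r ∩ H' := by
    ext x
    simp only [mem_preimage, mem_inter_iff, mem_closedBall_iff_norm, sub_zero,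
      add_sub_cancel_right, H, H', mem_ofPred_eq, inner_add_left, real_inner_self_eq_norm_sq]
    constructor <;> rintro ⟨h1, h2⟩ <;> exact ⟨h1, by linarith⟩
  have hslab : closedBall 0 r ∩ {x | ⟪x, v⟫ ∈ Ioc (-(‖v‖ ^ 2 / 2)) (‖v‖ ^ 2 / 2)} =
      (closedBall 0 r ∩ H) \ (closedBall 0 r ∩ H') := by
    ext x
    simp only [Set.mem_sdiff, mem_inter_iff, mem_ofPred_eq, mem_Ioc, H, H', not_and, not_le]
    tauto
  have hsub' : closedBall 0 r ∩ H' ⊆ closedBall 0 r ∩ H :=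
    inter_subset_inter_right _ fun x (hx : ⟪x, v⟫ ≤ -(‖v‖ ^ 2 / 2)) =>
      hx.trans (neg_le_self (by positivity))
  have hfin : μ (closedBall 0 r ∩ H') ≠ ∞ :=
    ((measure_mono inter_subset_left).trans_lt measure_closedBall_lt_top).ne
  calc μ (closedBall 0 r \ closedBall v r)
      = μ (closedBall 0 r ∩ H) - μ (closedBall v r ∩ H) := by
        rw [hdiff, measure_sdiff hsub (measurableSet_closedBall.inter hH).nullMeasurableSet
          ((measure_mono inter_subset_left).trans_lt measure_closedBall_lt_top).ne]
    _ = μ (closedBall 0 r ∩ H) - μ (closedBall 0 r ∩ H') := by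
        rw [← htranslate, measure_preimage_add_right]
    _ = _ := by
        rw [hslab, measure_sdiff hsub' (measurableSet_closedBall.inter hH').nullMeasurableSet hfin]

end Lens

namespace EuclideanSpace

variable {n : ℕ}

noncomputable def headTailEquiv (n : ℕ) :
    EuclideanSpace ℝ (Fin (n + 1)) ≃ᵐ ℝ × EuclideanSpace ℝ (Fin n) :=
  (MeasurableEquiv.toLp 2 _).symm.trans <| (MeasurableEquiv.piFinSuccAbove (fun _ => ℝ) 0).trans <|
    MeasurableEquiv.prodCongr (MeasurableEquiv.refl ℝ) (MeasurableEquiv.toLp 2 _)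

theorem measurePreserving_headTailEquiv : MeasurePreserving (headTailEquiv n) :=
  (volume_preserving_symm_measurableEquiv_toLp _).trans <|
    (volume_preserving_piFinSuccAbove (fun _ => ℝ) 0).trans <|
      (MeasurePreserving.id volume).prod (PiLp.volume_preserving_toLp _)

theorem norm_sq_eq_headTailEquiv (x : EuclideanSpace ℝ (Fin (n + 1))) :
    ‖x‖ ^ 2 = x 0 ^ 2 + ‖(headTailEquiv n x).2‖ ^ 2 := by
  simp [EuclideanSpace.norm_sq_eq, Fin.sum_univ_succ, headTailEquiv,
    MeasurableEquiv.piFinSuccAbove, MeasurableEquiv.prodCongr, Fin.tail]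

theorem volume_headTailEquiv_preimage_prod (s : Set ℝ) (t : Set (EuclideanSpace ℝ (Fin n))) :
    volume (headTailEquiv n ⁻¹' s ×ˢ t) = volume s * volume t := by
  rw [measurePreserving_headTailEquiv.measure_preimage_equiv, Measure.volume_eq_prod,
    Measure.prod_prod]

theorem volume_real_headTailEquiv_preimage_prod (s : Set ℝ)
    (t : Set (EuclideanSpace ℝ (Fin n))) :
    volume.real (headTailEquiv n ⁻¹' s ×ˢ t) = volume.real s * volume.real t := by
  rw [measureReal_def, volume_headTailEquiv_preimage_prod, ENNReal.toReal_mul]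
  rfl

end EuclideanSpace

section Slab

open EuclideanSpace

variable {n : ℕ}

theorem volume_real_closedBall_inter_slab_le {Δ : ℝ} (hΔ : 0 ≤ Δ) :
    volume.real (closedBall (0 : EuclideanSpace ℝ (Fin (n + 1))) 1 ∩
        {x | x 0 ∈ Ioc (-(Δ / 2)) (Δ / 2)}) ≤
      Δ * volume.real (closedBall (0 : EuclideanSpace ℝ (Fin n)) 1) := by
  have hcyl := volume_headTailEquiv_preimage_prod (Ioc (-(Δ / 2)) (Δ / 2))
    (closedBall (0 : EuclideanSpace ℝ (Fin n)) 1)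
  calc _ ≤ volume.real (headTailEquiv n ⁻¹' Ioc (-(Δ / 2)) (Δ / 2) ×ˢ closedBall 0 1) := by
        refine measureReal_mono ?_
          (hcyl ▸ ENNReal.mul_ne_top (by simp) measure_closedBall_lt_top.ne)
        rintro x ⟨hx, hslab⟩
        refine ⟨hslab, mem_closedBall_zero_iff.2 ?_⟩
        have hnorm := norm_sq_eq_headTailEquiv x
        have hx1 := mem_closedBall_zero_iff.1 hx
        nlinarith [norm_nonneg (headTailEquiv n x).2, norm_nonneg x, sq_nonneg (x 0)]
    _ = Δ * _ := by
        rw [volume_real_headTailEquiv_preimage_prod, Real.volume_real_Ioc_of_le (by linarith)]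
        ring

theorem le_volume_real_closedBall_inter_slab {Δ : ℝ} (hΔ₀ : 0 ≤ Δ) (hΔ₂ : Δ ≤ 2) :
    Δ * (√(1 - Δ ^ 2 / 4) ^ n * volume.real (closedBall (0 : EuclideanSpace ℝ (Fin n)) 1)) ≤
      volume.real (closedBall (0 : EuclideanSpace ℝ (Fin (n + 1))) 1 ∩
        {x | x 0 ∈ Ioc (-(Δ / 2)) (Δ / 2)}) := by
  have hρ : √(1 - Δ ^ 2 / 4) ^ 2 = 1 - Δ ^ 2 / 4 := Real.sq_sqrt (by nlinarith)
  calc _ = volume.real (headTailEquiv n ⁻¹'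
        Ioc (-(Δ / 2)) (Δ / 2) ×ˢ closedBall 0 √(1 - Δ ^ 2 / 4)) := by
        rw [volume_real_headTailEquiv_preimage_prod, Real.volume_real_Ioc_of_le (by linarith),
          Measure.addHaar_real_closedBall' _ _ (Real.sqrt_nonneg _), finrank_euclideanSpace_fin]
        ring
    _ ≤ _ := by
        refine measureReal_mono ?_
          ((measure_mono inter_subset_left).trans_lt measure_closedBall_lt_top).ne
        rintro x ⟨hslab, htail⟩
        refine ⟨mem_closedBall_zero_iff.2 ?_, hslab⟩
        have hnorm := norm_sq_eq_headTailEquiv x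
        have htail' := pow_le_pow_left₀ (norm_nonneg _) (mem_closedBall_zero_iff.1 htail) 2
        obtain ⟨hlo, hhi⟩ : x 0 ∈ Ioc (-(Δ / 2)) (Δ / 2) := hslab
        nlinarith [norm_nonneg x]

end Slab

theorem unitBallVol_sub_V₁_eq {d : ℕ} (hd : 0 < d) {Δ : ℝ} (hΔ : 0 < Δ) :
    unitBallVol d - V₁ d hd Δ = volume.real (closedBall (0 : EuclideanSpace ℝ (Fin d)) 1 ∩
      {x | x ⟨0, hd⟩ ∈ Ioc (-(Δ / 2)) (Δ / 2)}) := by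
  set v := EuclideanSpace.single (⟨0, hd⟩ : Fin d) Δ
  have hslab : {x : EuclideanSpace ℝ (Fin d) | ⟪x, v⟫ ∈ Ioc (-(‖v‖ ^ 2 / 2)) (‖v‖ ^ 2 / 2)} =
      {x | x ⟨0, hd⟩ ∈ Ioc (-(Δ / 2)) (Δ / 2)} := by
    ext x
    simp only [v, mem_ofPred_eq, mem_Ioc, EuclideanSpace.inner_single_right,
      PiLp.norm_single, Real.norm_eq_abs, sq_abs, conj_trivial]
    constructor <;> rintro ⟨h₁, h₂⟩ <;> constructor <;> nlinarith
  have hsplit := measureReal_sdiff_add_inter (μ := volume) (s := closedBall 0 1)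
    (measurableSet_closedBall (x := v) (ε := 1)) measure_closedBall_lt_top.ne
  rw [unitBallVol, V₁, ← measureReal_def, ← measureReal_def, ← hsplit, add_sub_cancel_right,
    measureReal_def, measure_closedBall_diff_closedBall, hslab, measureReal_def]

/-- `V₁(Δ) = ω_d - ω_{d-1} Δ + o(Δ)` as `Δ → 0⁺`; equivalently,
`lim_{Δ→0⁺} (ω_d - V₁(Δ))/Δ = ω_{d-1}`. -/
theorem vol_inter_unit_balls_asymptotics {d : ℕ} (hd : 0 < d) :
    Tendsto (fun Δ : ℝ => (unitBallVol d - V₁ d hd Δ) / Δ)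
      (nhdsWithin 0 (Set.Ioi 0)) (nhds (unitBallVol (d - 1))) := by
  obtain ⟨n, rfl⟩ : ∃ n, d = n + 1 := ⟨d - 1, by omega⟩
  rw [Nat.add_sub_cancel]
  have hlower : Tendsto (fun Δ : ℝ => √(1 - Δ ^ 2 / 4) ^ n * unitBallVol n)
      (nhdsWithin 0 (Ioi 0)) (nhds (unitBallVol n)) := by
    have hcont : Continuous fun Δ : ℝ => √(1 - Δ ^ 2 / 4) ^ n * unitBallVol n := by fun_prop
    simpa using (hcont.tendsto 0).mono_left nhdsWithin_le_nhds
  refine tendsto_of_tendsto_of_tendsto_of_le_of_le' hlower tendsto_const_nhds ?_ ?_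
  · filter_upwards [Ioo_mem_nhdsGT (show (0 : ℝ) < 2 by norm_num)] with Δ ⟨hΔ₀, hΔ₂⟩
    rw [le_div_iff₀ hΔ₀, mul_comm, unitBallVol_sub_V₁_eq hd hΔ₀]
    exact le_volume_real_closedBall_inter_slab hΔ₀.le hΔ₂.le
  · filter_upwards [self_mem_nhdsWithin] with Δ (hΔ : 0 < Δ)
    rw [div_le_iff₀ hΔ, mul_comm, unitBallVol_sub_V₁_eq hd hΔ]
    exact volume_real_closedBall_inter_slab_le hΔ.le
end
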